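/- arXiv:1603.00697 — 4 statements merged into one kernel-verified Lean document; each statement's English description precedes it below -/
import Mathlib

section
/- Two quaternions p, q ∈ ℍ are similar, i.e. there exists s ∈ ℍ \ {0} with p = s⁻¹ · q · s, if and only if re p = re q and |im p| = |im q|. Consequently the similarity class of p is [p] = {p' ∈ ℍ : re p' = re p and |im p'| = |im p|}. -/
/-! Conjugation fixes the real part (`re (ab) = re (ba)`) and the norm, hence also `normSq (im q) =
normSq q - (re q)²`. Conversely, real parts are central, so it suffices to conjugate `u = im p`
into `v = im q` when `normSq u = normSq v`. As `u² = -normSq u = v²`, the element `s = u + v`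
satisfies `s u = v s`; if `u + v = 0`, any nonzero pure quaternion orthogonal to `u` anticommutes
with `u` and does the job. -/

open Quaternion MeasureTheory ENNReal

noncomputable section

/-- `q` belongs to the imaginary unit sphere `𝕊`. -/
def inS (q : ℍ[ℝ]) : Prop := star q = -q ∧ ‖q‖ = 1

/-- The slice `ℂ_m = {α + mβ : α, β ∈ ℝ}`. -/
def quatSlice (m : ℍ[ℝ]) : Set ℍ[ℝ] := {q | ∃ α β : ℝ, q = (α : ℍ[ℝ]) + m * (β : ℍ[ℝ])}

theorem isConj_iff_exists_eq_inv_mul_mul₀ {α : Type*} [GroupWithZero α] {a b : α} :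
    IsConj a b ↔ ∃ s, s ≠ 0 ∧ b = s⁻¹ * a * s := by
  rw [GroupWithZero.isConj_iff₀]
  constructor
  · rintro ⟨c, hc, rfl⟩
    exact ⟨c⁻¹, inv_ne_zero hc, by rw [inv_inv]⟩
  · rintro ⟨s, hs, rfl⟩
    exact ⟨s⁻¹, inv_ne_zero hs, by rw [inv_inv]⟩

namespace Quaternion

section CommRing

variable {R : Type*} [CommRing R]

theorem re_mul_comm (a b : ℍ[R]) : (a * b).re = (b * a).re := by
  simp only [re_mul]
  ring

theorem normSq_eq_re_sq_add_normSq_im (a : ℍ[R]) : normSq a = a.re ^ 2 + normSq a.im := by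
  simp only [normSq_def', re_im, imI_im, imJ_im, imK_im]
  ring

theorem IsConj.re_eq {a b : ℍ[R]} (h : IsConj a b) : a.re = b.re := by
  obtain ⟨c, hc⟩ := h
  rw [← (Units.mul_inv_eq_iff_eq_mul c).mpr hc, re_mul_comm, Units.inv_mul_cancel_left]

theorem IsConj.normSq_eq {a b : ℍ[R]} (h : IsConj a b) : normSq a = normSq b :=
  isConj_iff_eq.mp ((normSq : ℍ[R] →*₀ R).toMonoidHom.map_isConj h)

theorem IsConj.normSq_im_eq {a b : ℍ[R]} (h : IsConj a b) : normSq a.im = normSq b.im := by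
  have hnormSq := h.normSq_eq
  rw [normSq_eq_re_sq_add_normSq_im a, normSq_eq_re_sq_add_normSq_im b, h.re_eq] at hnormSq
  exact add_left_cancel hnormSq

theorem semiconjBy_add_im_of_normSq_im_eq {a b : ℍ[R]} (h : normSq a.im = normSq b.im) :
    SemiconjBy (a.im + b.im) a.im b.im := by
  rw [SemiconjBy, add_mul, mul_add, ← sq, ← sq, im_sq, im_sq, h, add_comm]

theorem semiconjBy_neg_of_re_mul_eq_zero {s u : ℍ[R]} (hs : s.re = 0) (hu : u.re = 0)
    (hsu : (s * u).re = 0) : SemiconjBy s u (-u) := by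
  rw [re_mul, hs, hu] at hsu
  apply Quaternion.ext <;>
    simp only [re_mul, imI_mul, imJ_mul, imK_mul, re_neg, imI_neg, imJ_neg, imK_neg, hs, hu]
  · linear_combination 2 * hsu
  all_goals ring

-- No choice of `s` depending continuously on `u` exists (hairy ball theorem), hence the case split.
theorem exists_ne_zero_re_eq_zero_re_mul_eq_zero [Nontrivial R] (u : ℍ[R]) :
    ∃ s : ℍ[R], s ≠ 0 ∧ s.re = 0 ∧ (s * u).re = 0 := by
  by_cases hu : u.imI = 0 ∧ u.imJ = 0
  · obtain ⟨s, hre, hI, hJ, hK⟩ : ∃ s : ℍ[R], s.re = 0 ∧ s.imI = 1 ∧ s.imJ = 0 ∧ s.imK = 0 :=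
      ⟨⟨0, 1, 0, 0⟩, rfl, rfl, rfl, rfl⟩
    refine ⟨s, fun h => one_ne_zero (hI.symm.trans congr(QuaternionAlgebra.imI $h)), hre, ?_⟩
    simp [re_mul, hre, hI, hJ, hK, hu.1]
  · obtain ⟨s, hre, hI, hJ, hK⟩ :
        ∃ s : ℍ[R], s.re = 0 ∧ s.imI = u.imJ ∧ s.imJ = -u.imI ∧ s.imK = 0 :=
      ⟨⟨0, u.imJ, -u.imI, 0⟩, rfl, rfl, rfl, rfl⟩
    refine ⟨s, fun h => hu ⟨?_, ?_⟩, hre, ?_⟩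
    · simpa [hJ] using congr(QuaternionAlgebra.imJ $h)
    · simpa [hI] using congr(QuaternionAlgebra.imI $h)
    · rw [re_mul, hre, hI, hJ, hK]
      ring

theorem exists_ne_zero_semiconjBy_im [Nontrivial R] {a b : ℍ[R]}
    (h : normSq a.im = normSq b.im) : ∃ s : ℍ[R], s ≠ 0 ∧ SemiconjBy s a.im b.im := by
  by_cases hab : a.im + b.im = 0
  · obtain ⟨s, hs, hre, has⟩ := exists_ne_zero_re_eq_zero_re_mul_eq_zero a.im
    rw [← neg_eq_of_add_eq_zero_right hab]
    exact ⟨s, hs, semiconjBy_neg_of_re_mul_eq_zero hre (re_im a) has⟩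
  · exact ⟨_, hab, semiconjBy_add_im_of_normSq_im_eq h⟩

end CommRing

theorem isConj_iff {R : Type*} [Field R] [LinearOrder R] [IsStrictOrderedRing R] {a b : ℍ[R]} :
    IsConj a b ↔ a.re = b.re ∧ normSq a.im = normSq b.im := by
  refine ⟨fun h => ⟨h.re_eq, h.normSq_im_eq⟩, fun ⟨hre, him⟩ => ?_⟩
  obtain ⟨s, hs, hsim⟩ := exists_ne_zero_semiconjBy_im him
  have hsre : SemiconjBy s (a.re : ℍ[R]) (b.re : ℍ[R]) := hre ▸ (coe_commute _ s).symm
  refine ⟨Units.mk0 s hs, ?_⟩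
  rw [← re_add_im a, ← re_add_im b]
  exact hsre.add_right hsim

theorem norm_eq_norm_iff_normSq_eq (a b : ℍ[ℝ]) : ‖a‖ = ‖b‖ ↔ normSq a = normSq b := by
  rw [normSq_eq_norm_mul_self, normSq_eq_norm_mul_self,
    mul_self_inj (norm_nonneg a) (norm_nonneg b)]

end Quaternion

/-- Two quaternions are similar iff they have the same real part and the same
modulus of the imaginary part; consequently the similarity class of `p` is
`{p' : re p' = re p, |im p'| = |im p|}`. -/
theorem similar_iff_re_eq_and_norm_im_eq (p q : ℍ[ℝ]) :
    ((∃ s : ℍ[ℝ], s ≠ 0 ∧ p = s⁻¹ * q * s) ↔ p.re = q.re ∧ ‖p.im‖ = ‖q.im‖) ∧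
    {p' : ℍ[ℝ] | ∃ s : ℍ[ℝ], s ≠ 0 ∧ p' = s⁻¹ * p * s} =
      {p' : ℍ[ℝ] | p'.re = p.re ∧ ‖p'.im‖ = ‖p.im‖} := by
  have similar_iff (p q : ℍ[ℝ]) :
      (∃ s : ℍ[ℝ], s ≠ 0 ∧ p = s⁻¹ * q * s) ↔ p.re = q.re ∧ ‖p.im‖ = ‖q.im‖ := by
    rw [← isConj_iff_exists_eq_inv_mul_mul₀, isConj_comm, Quaternion.isConj_iff,
      Quaternion.norm_eq_norm_iff_normSq_eq]
  exact ⟨similar_iff p q, Set.ext fun p' => similar_iff p' p⟩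
end
end

section
/- Let (Ω, μ) be a measure space and let m, n ∈ 𝕊 with m · n = - n · m. Every f ∈ L²(Ω; ℍ; μ) can be written uniquely as f = F₁ + F₂ · n, where F₁, F₂ ∈ L²(Ω; ℍ; μ) take values in ℂ_m μ-almost everywhere; moreover ‖f‖² = ‖F₁‖² + ‖F₂‖². -/
/-!
Since `m² = -1`, every quaternion splits as `q = (q - m q m)/2 + (q + m q m)/2` into a part
commuting with `m` and a part anticommuting with it. The elements commuting with `m` are exactly
`ℂ_m`, and as `n` anticommutes with `m` and `n² = -1`, the anticommuting part is `F₂ · n` with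
`F₂ ∈ ℂ_m`. The two parts differ by `-m q m`, which has the norm of `q`, so the parallelogram law
gives `|q|² = |F₁|² + |F₂|²`; hence the pointwise maps act on `L²` and the norm identity
integrates. Uniqueness is pointwise: a nonzero element cannot both commute and anticommute
with `m`.
-/

open Quaternion MeasureTheory ENNReal

noncomputable section

section Anticommute

variable {R : Type*} [Ring R] {a b c : R}

lemma commute_mul_of_anticommute (hb : a * b = -(b * a)) (hc : a * c = -(c * a)) :
    Commute a (b * c) := by
  rw [Commute, SemiconjBy, ← mul_assoc, hb, neg_mul, mul_assoc, hc, mul_neg, neg_neg, mul_assoc]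

lemma anticommute_mul_of_commute (hb : Commute a b) (hc : a * c = -(c * a)) :
    a * (b * c) = -(b * c * a) := by
  rw [← mul_assoc, hb.eq, mul_assoc, hc, mul_neg, mul_assoc]

lemma eq_zero_of_add_mul_eq_zero [NoZeroDivisors R] [IsAddTorsionFree R] (ha : a ≠ 0)
    (hc₀ : c ≠ 0) (hc : a * c = -(c * a)) {x y : R} (hx : Commute a x) (hy : Commute a y)
    (h : x + y * c = 0) : x = 0 ∧ y = 0 := by
  have hxy : x = -(y * c) := eq_neg_of_add_eq_zero_left h
  have hxa : a * x = -(x * a) := by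
    rw [hxy, mul_neg, anticommute_mul_of_commute hy hc, neg_mul]
  rw [hx.eq] at hxa
  have hx₀ : x = 0 := (mul_eq_zero.mp (self_eq_neg.mp hxa)).resolve_right ha
  refine ⟨hx₀, (mul_eq_zero.mp ?_).resolve_right hc₀⟩
  rwa [hx₀, zero_add] at h

end Anticommute

namespace inS

variable {m : ℍ[ℝ]} (hm : inS m)
include hm

lemma ne_zero : m ≠ 0 := by
  rintro rfl
  simpa using hm.2

lemma mul_self : m * m = -1 := by
  have h := self_mul_star m
  rw [hm.1, normSq_eq_norm_mul_self, hm.2, mul_neg] at h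
  simpa using congrArg Neg.neg h

lemma mul_mul_mul_left (q : ℍ[ℝ]) : m * (m * q * m) = -(q * m) := by
  simp only [← mul_assoc, hm.mul_self, neg_mul, one_mul]

lemma mul_mul_mul_right (q : ℍ[ℝ]) : m * q * m * m = -(m * q) := by
  rw [mul_assoc, hm.mul_self, mul_neg_one]

end inS

lemma commute_of_mem_quatSlice {m q : ℍ[ℝ]} (hq : q ∈ quatSlice m) : Commute m q := by
  obtain ⟨α, β, rfl⟩ := hq
  exact (coe_commute α m).symm.add_right ((Commute.refl m).mul_right (coe_commute β m).symm)

/-- `q.im` commutes with `m`, so `m * q.im` is self-adjoint, hence real. -/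
lemma mem_quatSlice_of_commute {m q : ℍ[ℝ]} (hm : inS m) (hq : Commute m q) :
    q ∈ quatSlice m := by
  have him : Commute m q.im := by
    rw [← sub_eq_of_eq_add' (re_add_im q).symm]
    exact hq.sub_right (coe_commute q.re m).symm
  have hreal : m * q.im = ((m * q.im).re : ℍ[ℝ]) := by
    rw [← star_eq_self, star_mul, star_im, hm.1, neg_mul_neg, him.eq]
  refine ⟨q.re, -(m * q.im).re, ?_⟩
  conv_lhs => rw [← re_add_im q]
  rw [coe_neg, mul_neg, ← hreal, ← mul_assoc, hm.mul_self, neg_one_mul, neg_neg]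

lemma mem_quatSlice_iff_commute {m q : ℍ[ℝ]} (hm : inS m) : q ∈ quatSlice m ↔ Commute m q :=
  ⟨commute_of_mem_quatSlice, mem_quatSlice_of_commute hm⟩

lemma eq_of_add_mul_eq_add_mul {m n a₁ a₂ b₁ b₂ : ℍ[ℝ]} (hm : inS m) (hn : inS n)
    (hanti : m * n = -(n * m)) (ha₁ : a₁ ∈ quatSlice m) (ha₂ : a₂ ∈ quatSlice m)
    (hb₁ : b₁ ∈ quatSlice m) (hb₂ : b₂ ∈ quatSlice m) (h : a₁ + b₁ * n = a₂ + b₂ * n) :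
    a₁ = a₂ ∧ b₁ = b₂ := by
  have : IsAddTorsionFree ℍ[ℝ] := .of_module_rat _
  rw [mem_quatSlice_iff_commute hm] at ha₁ ha₂ hb₁ hb₂
  have h₀ : (a₁ - a₂) + (b₁ - b₂) * n = 0 := by rw [sub_mul]; linear_combination (norm := abel) h
  obtain ⟨ha, hb⟩ := eq_zero_of_add_mul_eq_zero hm.ne_zero hn.ne_zero hanti
    (ha₁.sub_right ha₂) (hb₁.sub_right hb₂) h₀
  exact ⟨sub_eq_zero.mp ha, sub_eq_zero.mp hb⟩

/-- The coefficients of `q` in `ℂ_m ⊕ ℂ_m · n`: `sliceFst m q` is the part of `q` commuting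
with `m` and `sliceSnd m n q * n` the part anticommuting with it. -/
def sliceFst (m q : ℍ[ℝ]) : ℍ[ℝ] := (2 : ℝ)⁻¹ • (q - m * q * m)

def sliceSnd (m n q : ℍ[ℝ]) : ℍ[ℝ] := -((2 : ℝ)⁻¹ • (q + m * q * m) * n)

lemma continuous_sliceFst (m : ℍ[ℝ]) : Continuous (sliceFst m) := by
  unfold sliceFst; fun_prop

lemma continuous_sliceSnd (m n : ℍ[ℝ]) : Continuous (sliceSnd m n) := by
  unfold sliceSnd; fun_prop

section Pointwise

variable {m n : ℍ[ℝ]} (q : ℍ[ℝ])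

lemma sliceFst_mem_quatSlice (hm : inS m) : sliceFst m q ∈ quatSlice m := by
  rw [mem_quatSlice_iff_commute hm, Commute, SemiconjBy]
  simp only [sliceFst, mul_smul_comm, smul_mul_assoc, mul_sub, sub_mul, hm.mul_mul_mul_left,
    hm.mul_mul_mul_right]
  module

lemma anticommute_half_add_mul_mul (hm : inS m) :
    m * ((2 : ℝ)⁻¹ • (q + m * q * m)) = -((2 : ℝ)⁻¹ • (q + m * q * m) * m) := by
  simp only [mul_smul_comm, smul_mul_assoc, mul_add, add_mul, hm.mul_mul_mul_left,
    hm.mul_mul_mul_right]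
  module

lemma sliceSnd_mem_quatSlice (hm : inS m) (hanti : m * n = -(n * m)) :
    sliceSnd m n q ∈ quatSlice m :=
  (mem_quatSlice_iff_commute hm).mpr
    (commute_mul_of_anticommute (anticommute_half_add_mul_mul q hm) hanti).neg_right

lemma sliceFst_add_sliceSnd_mul (hn : inS n) : sliceFst m q + sliceSnd m n q * n = q := by
  rw [sliceSnd, neg_mul, mul_assoc, hn.mul_self, mul_neg_one, neg_neg, sliceFst]
  module

lemma sq_norm_eq_sq_norm_sliceFst_add_sq_norm_sliceSnd (hm : inS m) (hn : inS n) :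
    ‖q‖ ^ 2 = ‖sliceFst m q‖ ^ 2 + ‖sliceSnd m n q‖ ^ 2 := by
  have hsum : sliceFst m q + (2 : ℝ)⁻¹ • (q + m * q * m) = q := by rw [sliceFst]; module
  have hdiff : sliceFst m q - (2 : ℝ)⁻¹ • (q + m * q * m) = -(m * q * m) := by
    rw [sliceFst]; module
  have h := parallelogram_law_with_norm ℝ (sliceFst m q) ((2 : ℝ)⁻¹ • (q + m * q * m))
  rw [hsum, hdiff, norm_neg, norm_mul, norm_mul, hm.2] at h
  rw [sliceSnd, norm_neg, norm_mul, hn.2]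
  linarith

variable (hm : inS m) (hn : inS n)
include hm hn

lemma norm_sliceFst_le : ‖sliceFst m q‖ ≤ ‖q‖ :=
  (pow_le_pow_iff_left₀ (norm_nonneg _) (norm_nonneg _) two_ne_zero).mp <| by
    rw [sq_norm_eq_sq_norm_sliceFst_add_sq_norm_sliceSnd q hm hn]
    exact le_add_of_nonneg_right (sq_nonneg _)

lemma norm_sliceSnd_le : ‖sliceSnd m n q‖ ≤ ‖q‖ :=
  (pow_le_pow_iff_left₀ (norm_nonneg _) (norm_nonneg _) two_ne_zero).mp <| by
    rw [sq_norm_eq_sq_norm_sliceFst_add_sq_norm_sliceSnd q hm hn]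
    exact le_add_of_nonneg_left (sq_nonneg _)

end Pointwise

section L2

variable {Ω : Type*} [MeasurableSpace Ω] {μ : Measure Ω}

lemma Lp.exists_ae_eq_comp_of_norm_le {E F : Type*} [NormedAddCommGroup E]
    [NormedAddCommGroup F] {p : ℝ≥0∞} (f : Lp E p μ) {φ : E → F} (hφ : Continuous φ)
    (hle : ∀ x, ‖φ x‖ ≤ ‖x‖) : ∃ g : Lp F p μ, ∀ᵐ x ∂μ, g x = φ (f x) :=
  have hg : MemLp (fun x => φ (f x)) p μ :=
    (Lp.memLp f).of_le (hφ.comp_aestronglyMeasurable (Lp.aestronglyMeasurable f))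
      (ae_of_all _ fun x => hle (f x))
  ⟨hg.toLp _, hg.coeFn_toLp⟩

variable {E : Type*} [NormedAddCommGroup E] [InnerProductSpace ℝ E]

lemma L2.sq_norm_eq_integral_sq_norm (f : Lp E 2 μ) : ‖f‖ ^ 2 = ∫ x, ‖f x‖ ^ 2 ∂μ := by
  rw [← real_inner_self_eq_norm_sq, L2.inner_def]
  simp_rw [real_inner_self_eq_norm_sq]

lemma L2.integrable_sq_norm (f : Lp E 2 μ) : Integrable (fun x => ‖f x‖ ^ 2) μ :=
  (L2.integrable_inner f f).congr (ae_of_all _ fun _ => real_inner_self_eq_norm_sq _)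

lemma L2.sq_norm_eq_add_of_ae {f g h : Lp E 2 μ}
    (hfgh : ∀ᵐ x ∂μ, ‖f x‖ ^ 2 = ‖g x‖ ^ 2 + ‖h x‖ ^ 2) : ‖f‖ ^ 2 = ‖g‖ ^ 2 + ‖h‖ ^ 2 := by
  rw [L2.sq_norm_eq_integral_sq_norm, L2.sq_norm_eq_integral_sq_norm,
    L2.sq_norm_eq_integral_sq_norm,
    ← integral_add (L2.integrable_sq_norm g) (L2.integrable_sq_norm h)]
  exact integral_congr_ae hfgh

end L2

/-- Every `f ∈ L²(Ω; ℍ; μ)` decomposes uniquely as `f = F₁ + F₂ · n` with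
`F₁, F₂` valued in `ℂ_m` a.e., and `‖f‖² = ‖F₁‖² + ‖F₂‖²`. -/
theorem L2_slice_decomposition {Ω : Type*} [MeasurableSpace Ω]
    (μ : Measure Ω) (m n : ℍ[ℝ]) (hm : inS m) (hn : inS n)
    (hanti : m * n = -(n * m)) (f : Lp ℍ[ℝ] 2 μ) :
    ∃ F₁ F₂ : Lp ℍ[ℝ] 2 μ,
      (∀ᵐ x ∂μ, F₁ x ∈ quatSlice m) ∧ (∀ᵐ x ∂μ, F₂ x ∈ quatSlice m) ∧
      (∀ᵐ x ∂μ, f x = F₁ x + F₂ x * n) ∧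
      ‖f‖ ^ 2 = ‖F₁‖ ^ 2 + ‖F₂‖ ^ 2 ∧
      ∀ G₁ G₂ : Lp ℍ[ℝ] 2 μ,
        (∀ᵐ x ∂μ, G₁ x ∈ quatSlice m) → (∀ᵐ x ∂μ, G₂ x ∈ quatSlice m) →
        (∀ᵐ x ∂μ, f x = G₁ x + G₂ x * n) → G₁ = F₁ ∧ G₂ = F₂ := by
  obtain ⟨F₁, hF₁⟩ :=
    Lp.exists_ae_eq_comp_of_norm_le f (continuous_sliceFst m) (norm_sliceFst_le · hm hn)
  obtain ⟨F₂, hF₂⟩ :=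
    Lp.exists_ae_eq_comp_of_norm_le f (continuous_sliceSnd m n) (norm_sliceSnd_le · hm hn)
  have hmem₁ : ∀ᵐ x ∂μ, F₁ x ∈ quatSlice m :=
    hF₁.mono fun x hx => hx ▸ sliceFst_mem_quatSlice _ hm
  have hmem₂ : ∀ᵐ x ∂μ, F₂ x ∈ quatSlice m :=
    hF₂.mono fun x hx => hx ▸ sliceSnd_mem_quatSlice _ hm hanti
  have hdecomp : ∀ᵐ x ∂μ, f x = F₁ x + F₂ x * n := by
    filter_upwards [hF₁, hF₂] with x h₁ h₂
    rw [h₁, h₂, sliceFst_add_sliceSnd_mul _ hn]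
  refine ⟨F₁, F₂, hmem₁, hmem₂, hdecomp, L2.sq_norm_eq_add_of_ae ?_, fun G₁ G₂ hG₁ hG₂ hG => ?_⟩
  · filter_upwards [hF₁, hF₂] with x h₁ h₂
    rw [h₁, h₂]
    exact sq_norm_eq_sq_norm_sliceFst_add_sq_norm_sliceSnd _ hm hn
  · have hG : ∀ᵐ x ∂μ, G₁ x = F₁ x ∧ G₂ x = F₂ x := by
      filter_upwards [hG₁, hG₂, hmem₁, hmem₂, hG, hdecomp] with x g₁ g₂ f₁ f₂ hg hf
      exact eq_of_add_mul_eq_add_mul hm hn hanti g₁ f₁ g₂ f₂ (hg.symm.trans hf)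
    exact ⟨Lp.ext (hG.mono fun _ => And.left), Lp.ext (hG.mono fun _ => And.right)⟩
end
end

section
/- Let (Ω, μ) be a measure space and m ∈ 𝕊. The map J on L²(Ω; ℍ; μ) defined by (J f)(x) = m · f(x) is a surjective ℝ-linear isometry satisfying J ∘ J = -id and ⟪J f, g⟫ = -⟪f, J g⟫ for all f, g (so J is anti self-adjoint and unitary with respect to the real inner product), and its slice subspace {f ∈ L²(Ω; ℍ; μ) : J f = f · m} coincides with the set of f taking values in ℂ_m μ-almost everywhere, i.e. with L²(Ω; ℂ_m; μ). -/
open Quaternion MeasureTheory ENNReal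

noncomputable section

/-!
Take `J f = m • f`, with `ℍ` acting on itself by left multiplication. It is isometric because
`‖m‖ = 1`, `ℝ`-linear because `ℝ` is central in `ℍ`, squares to `-id` because `m² = -1`, and is
skew because `star m = -m`. For the slice: as `m` is purely imaginary,
`m q + q m = 2 (re q · m + re (m q))`, so `m q = q m` forces `m q ∈ ℂ_m`, hence `q = -m (m q) ∈ ℂ_m`.
-/

theorem MeasureTheory.Lp.norm_const_smul {α 𝕜 E : Type*} [MeasurableSpace α] {μ : Measure α}
    {p : ℝ≥0∞} [NormedDivisionRing 𝕜] [NormedAddCommGroup E] [Module 𝕜 E] [NormSMulClass 𝕜 E]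
    (c : 𝕜) (f : Lp E p μ) : ‖c • f‖ = ‖c‖ * ‖f‖ := by
  rw [Lp.norm_def, Lp.norm_def, eLpNorm_congr_ae (Lp.coeFn_smul c f), eLpNorm_const_smul,
    ENNReal.toReal_mul, toReal_enorm]

namespace Quaternion

theorem mul_add_mul_comm_of_re_eq_zero {m : ℍ[ℝ]} (hm : m.re = 0) (q : ℍ[ℝ]) :
    m * q + q * m = (2 : ℝ) • (q.re • m + ((m * q).re : ℍ[ℝ])) := by
  ext <;> simp [hm] <;> ring

theorem eq_re_add_mul_of_mul_comm {m q : ℍ[ℝ]} (hre : m.re = 0) (hsq : m * m = -1)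
    (h : m * q = q * m) : q = q.re + m * (-(m * q).re : ℝ) := by
  set r := (m * q).re
  have hmq : m * q = q.re • m + (r : ℍ[ℝ]) := by
    refine smul_right_injective ℍ[ℝ] (two_ne_zero : (2 : ℝ) ≠ 0) ?_
    calc (2 : ℝ) • (m * q) = m * q + q * m := by rw [two_smul, ← h]
      _ = _ := mul_add_mul_comm_of_re_eq_zero hre q
  calc q = -(m * (m * q)) := by rw [← mul_assoc, hsq, neg_one_mul, neg_neg]
    _ = q.re + m * (-r : ℝ) := by
      rw [hmq, mul_add, mul_smul_comm, hsq, smul_neg, coe_neg, mul_neg, neg_add, neg_neg,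
        ← Algebra.algebraMap_eq_smul_one]
      rfl

theorem re_star_mul_mul_of_star_eq_neg {m : ℍ[ℝ]} (hm : star m = -m) (a b : ℍ[ℝ]) :
    (star (m * a) * b).re = -(star a * (m * b)).re := by
  rw [star_mul, hm, mul_neg, neg_mul, mul_assoc, re_neg]

end Quaternion

theorem inS.re_eq_zero {m : ℍ[ℝ]} (hm : inS m) : m.re = 0 := by
  have h := congrArg QuaternionAlgebra.re hm.1
  rw [re_star, re_neg] at h
  linarith

theorem inS.mul_self_s15 {m : ℍ[ℝ]} (hm : inS m) : m * m = -1 := by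
  have h : star m * m = ((normSq m : ℝ) : ℍ[ℝ]) := star_mul_self m
  rw [hm.1, normSq_eq_norm_mul_self, hm.2, one_mul, neg_mul, neg_eq_iff_eq_neg] at h
  simpa using h

theorem inS.mul_comm_iff_mem_quatSlice {m : ℍ[ℝ]} (hm : inS m) (q : ℍ[ℝ]) :
    m * q = q * m ↔ q ∈ quatSlice m := by
  constructor
  · intro h
    exact ⟨q.re, -(m * q).re, eq_re_add_mul_of_mul_comm hm.re_eq_zero hm.mul_self_s15 h⟩
  · rintro ⟨α, β, rfl⟩
    exact ((coe_commute α m).symm.add_right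
      ((Commute.refl m).mul_right (coe_commute β m).symm)).eq

theorem inS.smul_smul_self {M : Type*} [AddCommGroup M] [Module ℍ[ℝ] M] {m : ℍ[ℝ]}
    (hm : inS m) (f : M) : m • m • f = -f := by
  rw [smul_smul, hm.mul_self_s15, neg_one_smul]

/-- Left multiplication by `m ∈ 𝕊` on `L²(Ω; ℍ; μ)` is a surjective ℝ-linear
isometry `J` with `J² = -id`, anti self-adjoint for the real inner product, and
its slice subspace `{f : J f = f · m}` is `L²(Ω; ℂ_m; μ)`. -/
theorem left_mult_is_antiselfadjoint_unitary {Ω : Type*} [MeasurableSpace Ω]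
    (μ : Measure Ω) (m : ℍ[ℝ]) (hm : inS m) :
    ∃ J : Lp ℍ[ℝ] 2 μ → Lp ℍ[ℝ] 2 μ,
      (∀ f : Lp ℍ[ℝ] 2 μ, ∀ᵐ x ∂μ, (J f) x = m * f x) ∧
      (∀ (c : ℝ) (f g : Lp ℍ[ℝ] 2 μ), J (c • f + g) = c • J f + J g) ∧
      (∀ f : Lp ℍ[ℝ] 2 μ, ‖J f‖ = ‖f‖) ∧
      Function.Surjective J ∧
      (∀ f : Lp ℍ[ℝ] 2 μ, J (J f) = -f) ∧
      (∀ f g : Lp ℍ[ℝ] 2 μ,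
        ∫ x, (star ((J f) x) * g x).re ∂μ = -∫ x, (star (f x) * (J g) x).re ∂μ) ∧
      (∀ f : Lp ℍ[ℝ] 2 μ,
        (∀ᵐ x ∂μ, (J f) x = f x * m) ↔ (∀ᵐ x ∂μ, f x ∈ quatSlice m)) := by
  have hJ (f : Lp ℍ[ℝ] 2 μ) : ∀ᵐ x ∂μ, (m • f) x = m * f x := Lp.coeFn_smul m f
  refine ⟨(m • ·), hJ, fun c f g => ?_, fun f => ?_, fun f => ⟨-(m • f), ?_⟩,
    hm.smul_smul_self, fun f g => ?_, fun f => ?_⟩ <;> beta_reduce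
  · rw [smul_add, smul_comm]
  · rw [Lp.norm_const_smul, hm.2, one_mul]
  · rw [smul_neg, hm.smul_smul_self, neg_neg]
  · rw [← integral_neg]
    refine integral_congr_ae ?_
    filter_upwards [hJ f, hJ g] with x hf hg
    rw [hf, hg, re_star_mul_mul_of_star_eq_neg hm.1]
  · refine Filter.eventually_congr ?_
    filter_upwards [hJ f] with x hf
    rw [hf, hm.mul_comm_iff_mem_quatSlice]

end
end

section
/- Let m ∈ 𝕊 and q ∈ ℍ. Then λ := re q + m · |im q| is similar to q (there exists s ∈ ℍ \ {0} with λ = s⁻¹ · q · s), and λ is the unique element of ℂ_m of the form a + m b with b ≥ 0 that is similar to q; that is, every quaternion is similar to exactly one point of the closed upper half plane ℂ_m⁺ := {a + m b : a ∈ ℝ, b ≥ 0}. -/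
/-!
Conjugation by `s ≠ 0` preserves the real part and the norm, hence also the norm of the imaginary
part; this gives uniqueness. For existence it suffices to conjugate `im q` to `m |im q|`. Two
pure imaginary quaternions `u`, `v` of equal norm have the same real square `-|u|²`, so
`u * w = w * v` for every `w = u t + t v`; and unless `u = 0`, one of `t = 1, i, j` gives `w ≠ 0`.
-/

open Quaternion MeasureTheory ENNReal

noncomputable section

theorem mul_add_mul_intertwines {R : Type*} [Ring R] {u v c : R} (hu : u * u = c)
    (hv : v * v = c) {t : R} (ht : Commute c t) :
    u * (u * t + t * v) = (u * t + t * v) * v := by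
  calc u * (u * t + t * v) = c * t + u * t * v := by rw [mul_add, ← mul_assoc, hu, mul_assoc]
    _ = t * c + u * t * v := by rw [ht.eq]
    _ = (u * t + t * v) * v := by rw [add_mul, mul_assoc t, hv, add_comm]

theorem norm_inv_mul_mul_self {𝕜 : Type*} [NormedDivisionRing 𝕜] {s : 𝕜} (hs : s ≠ 0) (q : 𝕜) :
    ‖s⁻¹ * q * s‖ = ‖q‖ := by
  rw [norm_mul, norm_mul, norm_inv, mul_right_comm, inv_mul_cancel₀ (norm_ne_zero_iff.mpr hs),
    one_mul]

namespace Quaternion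

theorem re_mul_comm_s18 {R : Type*} [CommRing R] (x y : ℍ[R]) : (x * y).re = (y * x).re := by
  simp only [re_mul]; ring

section OrderedField

variable {R : Type*} [Field R] [LinearOrder R] [IsStrictOrderedRing R] {s : ℍ[R]}

theorem re_inv_mul_mul_self (hs : s ≠ 0) (q : ℍ[R]) : (s⁻¹ * q * s).re = q.re := by
  rw [re_mul_comm_s18, mul_inv_cancel_left₀ hs]

theorem im_inv_mul_mul_self (hs : s ≠ 0) (q : ℍ[R]) :
    (s⁻¹ * q * s).im = s⁻¹ * q.im * s := by
  rw [← sub_re_self, re_inv_mul_mul_self hs, ← sub_re_self q, mul_sub, sub_mul, ← coe_commutes,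
    inv_mul_cancel_right₀ hs]

theorem mul_self_eq_neg_normSq {u : ℍ[R]} (hu : u.re = 0) :
    u * u = -((normSq u : R) : ℍ[R]) := by
  rw [← sq, sq_eq_neg_normSq.mpr hu]

theorem exists_mul_add_mul_ne_zero {u : ℍ[R]} (hu : u.re = 0) (hu0 : u ≠ 0) (v : ℍ[R]) :
    ∃ t, u * t + t * v ≠ 0 := by
  by_contra! h
  have hv : v = -u := by simpa [add_eq_zero_iff_neg_eq, eq_comm] using h 1
  subst hv
  -- `u` now commutes with every `t`, and commuting with `i` and `j` kills its imaginary part.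
  set i : ℍ[R] := ⟨0, 1, 0, 0⟩ with hi_def
  set j : ℍ[R] := ⟨0, 0, 1, 0⟩ with hj_def
  have hi := h i
  have hj := h j
  rw [Quaternion.ext_iff] at hi hj
  simp only [imI_add, imJ_add, imK_add, imI_mul, imJ_mul, imK_mul, imI_neg, imJ_neg, imK_neg,
    re_neg, imI_zero, imJ_zero, imK_zero] at hi hj
  simp only [hi_def, hj_def] at hi hj
  obtain ⟨-, -, hiJ, hiK⟩ := hi
  obtain ⟨-, -, -, hjK⟩ := hj
  apply hu0
  ext <;> simp <;> linarith

end OrderedField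

theorem exists_inv_mul_mul_self_eq_of_norm_eq {u v : ℍ[ℝ]} (hu : u.re = 0) (hv : v.re = 0)
    (huv : ‖u‖ = ‖v‖) : ∃ s ≠ 0, s⁻¹ * u * s = v := by
  rcases eq_or_ne u 0 with rfl | hu0
  · exact ⟨1, one_ne_zero, by simpa [eq_comm] using huv⟩
  obtain ⟨t, ht⟩ := exists_mul_add_mul_ne_zero hu hu0 v
  have hvv : v * v = -((normSq u : ℝ) : ℍ[ℝ]) := by
    rw [mul_self_eq_neg_normSq hv, normSq_eq_norm_mul_self, normSq_eq_norm_mul_self, huv]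
  refine ⟨u * t + t * v, ht, ?_⟩
  rw [mul_assoc, mul_add_mul_intertwines (mul_self_eq_neg_normSq hu) hvv
    (coe_commute _ t).neg_left, inv_mul_cancel_left₀ ht]

end Quaternion

theorem inS.norm_mul_coe {m : ℍ[ℝ]} (hm : inS m) (b : ℝ) : ‖m * (b : ℍ[ℝ])‖ = |b| := by
  rw [norm_mul, hm.2, one_mul, norm_coe, Real.norm_eq_abs]

theorem inS.re_mul_coe {m : ℍ[ℝ]} (hm : inS m) (b : ℝ) : (m * (b : ℍ[ℝ])).re = 0 := by
  rw [mul_coe_eq_smul, re_smul, hm.re_eq_zero, smul_zero]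

theorem inS.re_coe_add_mul_coe {m : ℍ[ℝ]} (hm : inS m) (a b : ℝ) :
    ((a : ℍ[ℝ]) + m * (b : ℍ[ℝ])).re = a := by
  rw [re_add, re_coe, hm.re_mul_coe, add_zero]

theorem inS.im_coe_add_mul_coe {m : ℍ[ℝ]} (hm : inS m) (a b : ℝ) :
    ((a : ℍ[ℝ]) + m * (b : ℍ[ℝ])).im = m * (b : ℍ[ℝ]) := by
  rw [im_add, im_coe, zero_add, ← sub_re_self, hm.re_mul_coe]
  exact sub_eq_self.mpr coe_zero

/-- Every quaternion is similar to exactly one point of the closed upper half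
plane `ℂ_m⁺`, namely `re q + m |im q|`. -/
theorem similar_to_unique_upper_halfplane_point (m : ℍ[ℝ]) (hm : inS m) (q : ℍ[ℝ]) :
    (∃ s : ℍ[ℝ], s ≠ 0 ∧
      ((q.re : ℝ) : ℍ[ℝ]) + m * ((‖q.im‖ : ℝ) : ℍ[ℝ]) = s⁻¹ * q * s) ∧
    ∀ a b : ℝ, 0 ≤ b →
      (∃ s : ℍ[ℝ], s ≠ 0 ∧ (a : ℍ[ℝ]) + m * (b : ℍ[ℝ]) = s⁻¹ * q * s) →
      (a : ℍ[ℝ]) + m * (b : ℍ[ℝ]) =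
        ((q.re : ℝ) : ℍ[ℝ]) + m * ((‖q.im‖ : ℝ) : ℍ[ℝ]) := by
  refine ⟨?_, fun a b hb ⟨s, hs, h⟩ => ?_⟩
  · obtain ⟨s, hs, hconj⟩ := exists_inv_mul_mul_self_eq_of_norm_eq (re_im q)
      (hm.re_mul_coe ‖q.im‖) (by rw [hm.norm_mul_coe, abs_norm])
    refine ⟨s, hs, ?_⟩
    rw [← re_add_im (s⁻¹ * q * s), re_inv_mul_mul_self hs, im_inv_mul_mul_self hs, hconj]
  · have ha : a = q.re := by
      rw [← hm.re_coe_add_mul_coe a b, h, re_inv_mul_mul_self hs]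
    have hb_norm : b = ‖q.im‖ := by
      rw [← abs_of_nonneg hb, ← hm.norm_mul_coe, ← hm.im_coe_add_mul_coe a, h,
        im_inv_mul_mul_self hs, norm_inv_mul_mul_self hs]
    rw [ha, hb_norm]
end
end
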